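/- Define the generalized Stirling numbers S(n,k)(a,b;r) by the recurrence S(n+1,k+1) = (−a·n + b·(k+1) + r)·S(n,k+1) + S(n,k) with S(0,0)=1 and S(n,k)=0 for k<0 or k>n (parameters a,b,r in a commutative ring). Then for all 0 ≤ k ≤ n and all x, the generalized falling factorial satisfies x(x−a)(x−2a)···(x−(n−1)a) = Σ_{k=0}^{n} S(n,k)(a,b;r) · (x−r)(x−r−b)···(x−r−(k−1)b). -/

import Mathlib

/-- Generalized Stirling numbers of Hsu and Shiue over a commutative ring. -/
def gSR {R : Type*} [CommRing R] (a b r : R) : ℕ → ℕ → R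
  | 0, 0 => 1
  | 0, _+1 => 0
  | n+1, 0 => (-a * n + r) * gSR a b r n 0
  | n+1, k+1 => (-a * n + b * (k+1) + r) * gSR a b r n (k+1) + gSR a b r n k

lemma gSR_zero {R : Type*} [CommRing R] (a b r : R) :
    ∀ n k : ℕ, n < k → gSR a b r n k = 0 := by
  intro n
  induction n with
  | zero => intro k hk; cases k with
    | zero => omega
    | succ k => rfl
  | succ n ih =>
    intro k hk
    cases k with
    | zero => omega
    | succ k =>
      show (-a * n + b * (k+1) + r) * gSR a b r n (k+1) + gSR a b r n k = 0
      rw [ih (k+1) (by omega), ih k (by omega)]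
      ring

/-- Connection-coefficient definition of the Hsu--Shiue numbers: generalized
Newton--Gregory expansion of the generalized falling factorial. -/
theorem gS_connection {R : Type*} [CommRing R] (a b r : R) (n : ℕ) (x : R) :
    ∏ i ∈ Finset.range n, (x - (i : R) * a) =
      ∑ k ∈ Finset.range (n+1), gSR a b r n k *
        ∏ i ∈ Finset.range k, (x - r - (i : R) * b) := by
  induction n with
  | zero => simp [gSR]
  | succ n ih =>
    rw [Finset.prod_range_succ, ih, Finset.sum_mul]
    have key : ∀ k ∈ Finset.range (n+1),
        gSR a b r n k * (∏ i ∈ Finset.range k, (x - r - (i : R) * b)) * (x - (n:R)*a)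
        = gSR a b r n k * ((-a * n + b * k + r) *
            ∏ i ∈ Finset.range k, (x - r - (i : R) * b))
          + gSR a b r n k * ∏ i ∈ Finset.range (k+1), (x - r - (i : R) * b) := by
      intro k _
      rw [Finset.prod_range_succ]
      ring
    have hrec : ∀ k : ℕ, gSR a b r (n+1) (k+1)
        = (-a * n + b * (k+1) + r) * gSR a b r n (k+1) + gSR a b r n k := fun k => rfl
    have h0 : gSR a b r (n+1) 0 = (-a * n + r) * gSR a b r n 0 := rfl
    rw [Finset.sum_congr rfl key, Finset.sum_add_distrib,
        Finset.sum_range_succ' (fun k => gSR a b r (n+1) k *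
          ∏ i ∈ Finset.range k, (x - r - (i : R) * b)) (n+1)]
    simp only [hrec, h0, Finset.prod_range_zero, mul_one]
    have split : ∑ k ∈ Finset.range (n+1),
          ((-a * (n:R) + b * ((k:R)+1) + r) * gSR a b r n (k+1) + gSR a b r n k) *
            ∏ i ∈ Finset.range (k+1), (x - r - (i : R) * b)
        = (∑ k ∈ Finset.range (n+1), (-a * (n:R) + b * ((k:R)+1) + r) * gSR a b r n (k+1) *
            ∏ i ∈ Finset.range (k+1), (x - r - (i : R) * b))
          + ∑ k ∈ Finset.range (n+1), gSR a b r n k *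
            ∏ i ∈ Finset.range (k+1), (x - r - (i : R) * b) := by
      rw [← Finset.sum_add_distrib]
      exact Finset.sum_congr rfl (fun k _ => by ring)
    rw [split]
    have hA : ∑ k ∈ Finset.range (n+1),
          gSR a b r n k * ((-a * (n:R) + b * (k:R) + r) *
            ∏ i ∈ Finset.range k, (x - r - (i : R) * b))
        = (∑ k ∈ Finset.range (n+1), (-a * (n:R) + b * ((k:R)+1) + r) * gSR a b r n (k+1) *
            ∏ i ∈ Finset.range (k+1), (x - r - (i : R) * b))
          + (-a * (n:R) + r) * gSR a b r n 0 := by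
      rw [Finset.sum_range_succ' (fun k => gSR a b r n k * ((-a * (n:R) + b * (k:R) + r) *
            ∏ i ∈ Finset.range k, (x - r - (i : R) * b))) n,
          Finset.sum_range_succ (fun k => (-a * (n:R) + b * ((k:R)+1) + r) * gSR a b r n (k+1) *
            ∏ i ∈ Finset.range (k+1), (x - r - (i : R) * b)) n,
          gSR_zero a b r n (n+1) (by omega)]
      simp only [Finset.prod_range_zero, Nat.cast_zero, mul_zero, zero_mul, mul_one, add_zero]
      congr 1
      · exact Finset.sum_congr rfl (fun k _ => by push_cast; ring)
      · ring
    rw [hA]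
    ring
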